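/- Let C₋, C₊ be isotropic elasticity tensors on Sym₃ with Lamé parameters (λ₋, μ₋) and (λ₊, μ₊), μ∓ > 0 and 3λ∓ + 2μ∓ > 0, let ν∓ = λ∓/(2(λ∓+μ∓)), and let ⟦C⟧ = C₊ − C₋. For each unit vector n ∈ ℝ³ define K₋(n) using (μ₋, ν₋) and K₊(n) using (μ₊, ν₊). Then for every unit vector n, the operator identity K₋(n)∘⟦C⟧∘K₊(n) = K₊(n)∘⟦C⟧∘K₋(n) = K₋(n) − K₊(n) holds on Sym₃; consequently (Id + K₋(n)∘⟦C⟧)∘(Id − K₊(n)∘⟦C⟧) = Id. -/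

import Mathlib

open Matrix

noncomputable section

/-- 3×3 real matrices; symmetric ones model Sym₃. -/
abbrev Mat := Matrix (Fin 3) (Fin 3) ℝ

/-- Inner product on matrices: a:b = tr(ab). -/
def inn (a b : Mat) : ℝ := (a * b).trace

/-- Isotropic elasticity tensor with Lamé parameters l, m: ε ↦ l(tr ε)E + 2mε. -/
def isoC (l m : ℝ) (e : Mat) : Mat := (l * e.trace) • (1 : Mat) + (2*m) • e

/-- The interface operator K(n) for material parameters (μ, ν):
K(n):q = (1/(2μ))(qₙ⊗n + n⊗qₙ − (qₙₙ/(1−ν)) n⊗n). -/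
def Kop (μ ν : ℝ) (n : Fin 3 → ℝ) (q : Mat) : Mat :=
  (1/(2*μ)) • (vecMulVec (q.mulVec n) n + vecMulVec n (q.mulVec n)
    - ((n ⬝ᵥ q.mulVec n)/(1-ν)) • vecMulVec n n)

/-
For an isotropic phase, `K(n) q = (G(n) (q n) ⊗ n)ˢ`, where `G(n)` is the inverse of the acoustic
tensor `A(n) = μ E + (λ + μ) n ⊗ n`, and conversely `C (g ⊗ n)ˢ n = A(n) g`. Hence
`K₋(n) ⟦C⟧ K₊(n) q = (G₋ (A₊ - A₋) G₊ (q n) ⊗ n)ˢ`, and the resolvent identity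
`G₋ (A₊ - A₋) G₊ = G₋ - G₊` gives the Kunin identity; the same computation with the phases swapped
gives the other order. The last identity then follows by linearity of `K₋(n)` and `⟦C⟧`.
-/

theorem mul_sub_mul_eq_sub_of_mul_eq_one {R : Type*} [Ring R] {g₁ a₁ a₂ g₂ : R}
    (h₁ : g₁ * a₁ = 1) (h₂ : a₂ * g₂ = 1) : g₁ * (a₂ - a₁) * g₂ = g₁ - g₂ := by
  rw [mul_sub, sub_mul, mul_assoc, h₂, mul_one, h₁, one_mul]

namespace Kunin

def symOuter (g n : Fin 3 → ℝ) : Mat := (2⁻¹ : ℝ) • (vecMulVec g n + vecMulVec n g)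

def acousticTensor (l μ : ℝ) (n : Fin 3 → ℝ) : Mat := μ • 1 + (l + μ) • vecMulVec n n

def inverseAcousticTensor (μ ν : ℝ) (n : Fin 3 → ℝ) : Mat :=
  μ⁻¹ • (1 - (2 * (1 - ν))⁻¹ • vecMulVec n n)

lemma Kop_eq_symOuter (μ ν : ℝ) (n : Fin 3 → ℝ) (q : Mat) :
    Kop μ ν n q = symOuter (inverseAcousticTensor μ ν n *ᵥ (q *ᵥ n)) n := by
  simp only [Kop, symOuter, inverseAcousticTensor, smul_mulVec, sub_mulVec, one_mulVec,
    vecMulVec_mulVec, op_smul_eq_smul, smul_vecMulVec, vecMulVec_smul, sub_vecMulVec,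
    vecMulVec_sub, mul_inv]
  module

lemma Kop_sub (μ ν : ℝ) (n : Fin 3 → ℝ) (a b : Mat) :
    Kop μ ν n (a - b) = Kop μ ν n a - Kop μ ν n b := by
  simp only [Kop, sub_mulVec, sub_vecMulVec, vecMulVec_sub, dotProduct_sub, sub_div, sub_smul]
  module

lemma Kop_neg (μ ν : ℝ) (n : Fin 3 → ℝ) (a : Mat) : Kop μ ν n (-a) = -Kop μ ν n a := by
  simp only [Kop, neg_mulVec, neg_vecMulVec, vecMulVec_neg, dotProduct_neg, neg_div, neg_smul]
  module

lemma isoC_sub (l μ : ℝ) (a b : Mat) : isoC l μ (a - b) = isoC l μ a - isoC l μ b := by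
  simp only [isoC, trace_sub]
  module

lemma symOuter_sub (g h n : Fin 3 → ℝ) : symOuter (g - h) n = symOuter g n - symOuter h n := by
  simp only [symOuter, sub_vecMulVec, vecMulVec_sub]
  module

lemma isoC_symOuter_mulVec (l μ : ℝ) {n : Fin 3 → ℝ} (hn : n ⬝ᵥ n = 1) (g : Fin 3 → ℝ) :
    isoC l μ (symOuter g n) *ᵥ n = acousticTensor l μ n *ᵥ g := by
  simp only [isoC, symOuter, acousticTensor, add_mulVec, smul_mulVec, one_mulVec,
    vecMulVec_mulVec, trace_smul, trace_add, trace_vecMulVec, hn, dotProduct_comm n g,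
    op_smul_eq_smul]
  module

lemma acousticTensor_mul_inverseAcousticTensor {l μ ν : ℝ} (hμ : μ ≠ 0) (hlμ : l + μ ≠ 0)
    (hl2μ : l + 2 * μ ≠ 0) (hν : ν = l / (2 * (l + μ))) {n : Fin 3 → ℝ} (hn : n ⬝ᵥ n = 1) :
    acousticTensor l μ n * inverseAcousticTensor μ ν n = 1 := by
  have hd : (2 * (1 - ν))⁻¹ * (l + 2 * μ) = l + μ := by
    have h2ν : 2 * (1 - ν) = (l + 2 * μ) / (l + μ) := by rw [hν]; field_simp; ring
    rw [h2ν, inv_div, div_mul_cancel₀ _ hl2μ]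
  -- `n ⊗ n` is idempotent, so the product is `E + c • n ⊗ n`, and `hd` is exactly `c = 0`.
  simp only [acousticTensor, inverseAcousticTensor, mul_smul_comm, smul_mul_assoc, mul_sub,
    add_mul, mul_one, one_mul, vecMulVec_mul_vecMulVec, hn, one_smul]
  match_scalars
  · field_simp
  · linear_combination -μ⁻¹ * hd

lemma Kop_isoC_sub_isoC_Kop {l₁ μ₁ ν₁ l₂ μ₂ ν₂ : ℝ} {n : Fin 3 → ℝ} (hn : n ⬝ᵥ n = 1)
    (h₁ : inverseAcousticTensor μ₁ ν₁ n * acousticTensor l₁ μ₁ n = 1)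
    (h₂ : acousticTensor l₂ μ₂ n * inverseAcousticTensor μ₂ ν₂ n = 1) (q : Mat) :
    Kop μ₁ ν₁ n (isoC l₂ μ₂ (Kop μ₂ ν₂ n q) - isoC l₁ μ₁ (Kop μ₂ ν₂ n q))
      = Kop μ₁ ν₁ n q - Kop μ₂ ν₂ n q := by
  simp only [Kop_eq_symOuter, sub_mulVec, isoC_symOuter_mulVec _ _ hn]
  rw [← sub_mulVec, mulVec_mulVec, mulVec_mulVec,
    mul_sub_mul_eq_sub_of_mul_eq_one h₁ h₂, sub_mulVec, symOuter_sub]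

end Kunin

open Kunin in
/-- the Kunin identity K₋(n)∘⟦C⟧∘K₊(n) = K₊(n)∘⟦C⟧∘K₋(n) = K₋(n) − K₊(n)
on Sym₃, and consequently (Id + K₋(n)∘⟦C⟧)∘(Id − K₊(n)∘⟦C⟧) = Id. -/
theorem kunin_identity
    (lm μm lp μp : ℝ)
    (hμm : 0 < μm) (hkm : 0 < 3*lm + 2*μm) (hμp : 0 < μp) (hkp : 0 < 3*lp + 2*μp)
    (νm νp : ℝ) (hνm : νm = lm/(2*(lm + μm))) (hνp : νp = lp/(2*(lp + μp)))
    (jump : Mat → Mat) (hjump : ∀ q : Mat, jump q = isoC lp μp q - isoC lm μm q)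
    (n : Fin 3 → ℝ) (hn : n ⬝ᵥ n = 1) :
    ∀ q : Mat, q.IsSymm →
      Kop μm νm n (jump (Kop μp νp n q)) = Kop μm νm n q - Kop μp νp n q
      ∧ Kop μp νp n (jump (Kop μm νm n q)) = Kop μm νm n q - Kop μp νp n q
      ∧ (q - Kop μp νp n (jump q))
          + Kop μm νm n (jump (q - Kop μp νp n (jump q))) = q := by
  have acoustic_inv {l μ ν : ℝ} (hμ : 0 < μ) (hk : 0 < 3 * l + 2 * μ)
      (hν : ν = l / (2 * (l + μ))) : acousticTensor l μ n * inverseAcousticTensor μ ν n = 1 :=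
    acousticTensor_mul_inverseAcousticTensor hμ.ne' (by linarith) (by linarith) hν hn
  have hAm := acoustic_inv hμm hkm hνm
  have hAp := acoustic_inv hμp hkp hνp
  have hKmJKp (r : Mat) : Kop μm νm n (jump (Kop μp νp n r)) = Kop μm νm n r - Kop μp νp n r := by
    rw [hjump]
    exact Kop_isoC_sub_isoC_Kop hn (mul_eq_one_comm.mp hAm) hAp r
  intro q _
  refine ⟨hKmJKp q, ?_, ?_⟩
  · rw [hjump, ← neg_sub, Kop_neg, Kop_isoC_sub_isoC_Kop hn (mul_eq_one_comm.mp hAp) hAm, neg_sub]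
  · have jump_sub (a b : Mat) : jump (a - b) = jump a - jump b := by
      simp only [hjump, isoC_sub]
      abel
    rw [jump_sub, Kop_sub, hKmJKp]
    abel
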